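/- Let k₁, …, kₙ be positive integers with k₁ + ⋯ + kₙ = 2k. Consider the incomplete weighted profile P over candidates {A, B, C} consisting of: one agent of weight 1 with total order B > C > A; one agent of weight 2k−1 with total order B > A > C; one agent of weight 2k−1 with total order C > B > A; and, for each i, one agent of weight 2kᵢ whose partial order declares only A > B. Then B is a fair weak possible winner of P (i.e., B ∈ FWP(P), meaning B wins some balanced agenda in some completion of P) if and only if the multiset {k₁, …, kₙ} can be partitioned into two parts each summing to k. -/

import Mathlib

open scoped Classical

/-- An agenda: a binary tree whose leaves are labelled with candidates. -/
inductive Agenda (α : Type) : Type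
  | leaf (a : α) : Agenda α
  | node (l r : Agenda α) : Agenda α

namespace Agenda

/-- The list of leaf labels of an agenda. -/
def leaves {α : Type} : Agenda α → List α
  | leaf a => [a]
  | node l r => leaves l ++ leaves r

/-- The list of depths of the leaves of an agenda. -/
def depths {α : Type} : Agenda α → List ℕ
  | leaf _ => [0]
  | node l r => (depths l ++ depths r).map (· + 1)

end Agenda

/-- A valid agenda: leaves labelled bijectively with the candidates. -/
def IsAgenda {α : Type} [Fintype α] (t : Agenda α) : Prop :=
  t.leaves.Nodup ∧ ∀ a : α, a ∈ t.leaves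

/-- A balanced agenda: max and min leaf depths differ by at most 1. -/
def IsBalanced {α : Type} (t : Agenda α) : Prop :=
  ∀ d₁ ∈ t.depths, ∀ d₂ ∈ t.depths, d₁ ≤ d₂ + 1

/-- A tournament: complete asymmetric directed graph on the candidates. -/
def IsTournament {α : Type} (T : α → α → Prop) : Prop :=
  (∀ a, ¬ T a a) ∧ ∀ a b : α, a ≠ b → (T a b ↔ ¬ T b a)

/-- Winner of an agenda under a tournament: each internal node is won by
whichever child's winner beats the other; the root's candidate wins. -/
noncomputable def winner {α : Type} (T : α → α → Prop) : Agenda α → α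
  | .leaf a => a
  | .node l r => if T (winner T l) (winner T r) then winner T l else winner T r

/-- Strict partial order: asymmetric and transitive. -/
def IsSPO {α : Type} (r : α → α → Prop) : Prop :=
  (∀ a b, r a b → ¬ r b a) ∧ (∀ a b c, r a b → r b c → r a c)

/-- Strict total order. -/
def IsSTO {α : Type} (r : α → α → Prop) : Prop :=
  IsSPO r ∧ ∀ a b : α, a ≠ b → r a b ∨ r b a

/-- An (incomplete) weighted profile: a finite sequence of agents, each with a
positive weight and a strict partial order, the sum of weights being odd. -/
structure Profile (α : Type) where
  agents : List (ℕ × (α → α → Prop))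
  pos : ∀ p ∈ agents, 0 < p.1
  spo : ∀ p ∈ agents, IsSPO p.2
  oddSum : Odd (agents.map Prod.fst).sum

/-- Total weight of agents preferring `a` to `b`. -/
noncomputable def prefWeight {α : Type} (P : Profile α) (a b : α) : ℕ :=
  (P.agents.map (fun p => if p.2 a b then p.1 else 0)).sum

/-- The majority graph of a profile. -/
def maj {α : Type} (P : Profile α) (a b : α) : Prop :=
  prefWeight P b a < prefWeight P a b

/-- `Q` is a completion of `P`: same weights, each agent's partial order is
replaced by a strict total order extending it. -/
def IsCompletion {α : Type} (P Q : Profile α) : Prop :=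
  List.Forall₂ (fun p q => p.1 = q.1 ∧ IsSTO q.2 ∧ ∀ a b, p.2 a b → q.2 a b)
    P.agents Q.agents

/-- `T` extends the (incomplete majority) graph `G`. -/
def Extends {α : Type} (G T : α → α → Prop) : Prop := ∀ a b, G a b → T a b

/-- `A` wins some agenda under `T`. -/
def WinsSome {α : Type} [Fintype α] (T : α → α → Prop) (A : α) : Prop :=
  ∃ t : Agenda α, IsAgenda t ∧ winner T t = A

/-- `A` wins every agenda under `T`. -/
def WinsAll {α : Type} [Fintype α] (T : α → α → Prop) (A : α) : Prop :=
  ∀ t : Agenda α, IsAgenda t → winner T t = A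

/-- `A` wins some balanced agenda under `T`. -/
def FWinsSome {α : Type} [Fintype α] (T : α → α → Prop) (A : α) : Prop :=
  ∃ t : Agenda α, IsAgenda t ∧ IsBalanced t ∧ winner T t = A

/-- `A` wins every balanced agenda under `T`. -/
def FWinsAll {α : Type} [Fintype α] (T : α → α → Prop) (A : α) : Prop :=
  ∀ t : Agenda α, IsAgenda t → IsBalanced t → winner T t = A

/-- Weak possible winner of a profile. -/
def WPp {α : Type} [Fintype α] (P : Profile α) (A : α) : Prop :=
  ∃ Q : Profile α, IsCompletion P Q ∧ WinsSome (maj Q) A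

/-- Strong possible winner of a profile. -/
def SPp {α : Type} [Fintype α] (P : Profile α) (A : α) : Prop :=
  ∀ Q : Profile α, IsCompletion P Q → WinsSome (maj Q) A

/-- Weak Condorcet winner of a profile. -/
def WCp {α : Type} [Fintype α] (P : Profile α) (A : α) : Prop :=
  ∃ Q : Profile α, IsCompletion P Q ∧ WinsAll (maj Q) A

/-- Strong Condorcet winner of a profile. -/
def SCp {α : Type} [Fintype α] (P : Profile α) (A : α) : Prop :=
  ∀ Q : Profile α, IsCompletion P Q → WinsAll (maj Q) A

/-- Weak possible winner of an incomplete majority graph. -/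
def WPg {α : Type} [Fintype α] (G : α → α → Prop) (A : α) : Prop :=
  ∃ T : α → α → Prop, IsTournament T ∧ Extends G T ∧ WinsSome T A

/-- Strong possible winner of an incomplete majority graph. -/
def SPg {α : Type} [Fintype α] (G : α → α → Prop) (A : α) : Prop :=
  ∀ T : α → α → Prop, IsTournament T → Extends G T → WinsSome T A

/-- Weak Condorcet winner of an incomplete majority graph. -/
def WCg {α : Type} [Fintype α] (G : α → α → Prop) (A : α) : Prop :=
  ∃ T : α → α → Prop, IsTournament T ∧ Extends G T ∧ WinsAll T A

/-- Strong Condorcet winner of an incomplete majority graph. -/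
def SCg {α : Type} [Fintype α] (G : α → α → Prop) (A : α) : Prop :=
  ∀ T : α → α → Prop, IsTournament T → Extends G T → WinsAll T A

/-- A profile is unweighted if every agent has weight 1. -/
def IsUnweighted {α : Type} (P : Profile α) : Prop :=
  ∀ p ∈ P.agents, p.1 = 1

/-- `Q` is the unweighted profile corresponding to `P`: each agent of
weight `k` is replaced by `k` agents of weight 1 with the same order. -/
def IsUnwVersion {α : Type} (P Q : Profile α) : Prop :=
  Q.agents = P.agents.flatMap (fun p => List.replicate p.1 (1, p.2))

/-- Fair strong Condorcet winner of a profile (balanced agendas only). -/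
def FSCp {α : Type} [Fintype α] (P : Profile α) (A : α) : Prop :=
  ∀ Q : Profile α, IsCompletion P Q → FWinsAll (maj Q) A

/-- Fair weak Condorcet winner of a profile (balanced agendas only). -/
def FWCp {α : Type} [Fintype α] (P : Profile α) (A : α) : Prop :=
  ∃ Q : Profile α, IsCompletion P Q ∧ FWinsAll (maj Q) A

/-- Fair weak possible winner of a profile (balanced agendas only). -/
def FWPp {α : Type} [Fintype α] (P : Profile α) (A : α) : Prop :=
  ∃ Q : Profile α, IsCompletion P Q ∧ FWinsSome (maj Q) A

/-- The three candidates. -/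
inductive Cand : Type
  | A | B | C
deriving DecidableEq

instance : Fintype Cand where
  elems := {Cand.A, Cand.B, Cand.C}
  complete := by intro x; cases x <;> simp

/-- The strict total order `B > C > A` ("x is preferred to y"). -/
def ordBCA : Cand → Cand → Prop :=
  fun x y => (match x with | .B => 0 | .C => 1 | .A => 2) <
             (match y with | .B => 0 | .C => 1 | .A => (2:ℕ))

/-- The strict total order `B > A > C`. -/
def ordBAC : Cand → Cand → Prop :=
  fun x y => (match x with | .B => 0 | .A => 1 | .C => 2) <
             (match y with | .B => 0 | .A => 1 | .C => (2:ℕ))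

/-- The strict total order `C > B > A`. -/
def ordCBA : Cand → Cand → Prop :=
  fun x y => (match x with | .C => 0 | .B => 1 | .A => 2) <
             (match y with | .C => 0 | .B => 1 | .A => (2:ℕ))

/-- The incomplete preference declaring only `A > B`. -/
def onlyAB : Cand → Cand → Prop := fun x y => x = Cand.A ∧ y = Cand.B

/-- The profile of the reduction: one agent of weight `1` voting `B>C>A`,
one of weight `2k-1` voting `B>A>C`, one of weight `2k-1` voting `C>B>A`,
and for each `kᵢ` in `ks` one agent of weight `2kᵢ` declaring only `A>B`. -/
def P17 (ks : List ℕ) (k : ℕ) (hk : 0 < k) (hpos : ∀ x ∈ ks, 0 < x)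
    (hsum : ks.sum = 2 * k) : Profile Cand where
  agents :=
    (1, ordBCA) :: (2 * k - 1, ordBAC) :: (2 * k - 1, ordCBA) ::
      ks.map (fun ki => (2 * ki, onlyAB))
  pos := by
    intro p hp
    simp only [List.mem_cons, List.mem_map] at hp
    rcases hp with rfl | rfl | rfl | ⟨ki, hki, rfl⟩
    · norm_num
    · simp only; omega
    · simp only; omega
    · have := hpos ki hki; simp only; omega
  spo := by
    intro p hp
    simp only [List.mem_cons, List.mem_map] at hp
    rcases hp with rfl | rfl | rfl | ⟨ki, hki, rfl⟩
    · exact ⟨fun a b h h' => absurd h' (Nat.lt_asymm h),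
        fun a b c h h' => Nat.lt_trans h h'⟩
    · exact ⟨fun a b h h' => absurd h' (Nat.lt_asymm h),
        fun a b c h h' => Nat.lt_trans h h'⟩
    · exact ⟨fun a b h h' => absurd h' (Nat.lt_asymm h),
        fun a b c h h' => Nat.lt_trans h h'⟩
    · constructor
      · rintro a b ⟨rfl, rfl⟩ ⟨h, -⟩; cases h
      · rintro a b c ⟨rfl, rfl⟩ ⟨h, -⟩; cases h
  oddSum := by
    have hmap : ∀ l : List ℕ,
        ((l.map (fun ki => ((2 * ki : ℕ), onlyAB))).map Prod.fst).sum
          = 2 * l.sum := by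
      intro l
      rw [List.map_map]
      induction l with
      | nil => simp
      | cons a t ih => simp_all [Function.comp, Nat.mul_add]
    refine ⟨4 * k - 1, ?_⟩
    simp only [List.map_cons, List.sum_cons]
    rw [hmap ks, hsum]
    omega

/-! Every completion gives `A` the majority over `B`, since the agents declaring only `A > B`
carry weight `4k` against `4k - 1`. In a tournament the winner of an agenda reaches every
candidate along a chain of victories, so `B` can win only if `B` beats `C` and `C` beats `A`.
Let `2s` be the weight of the partial agents that rank `B` above `C`. Such agents also rank
`A` above `C`, and those ranking `C` above `A` also rank `C` above `B`; so `B` beats `C` iff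
`s ≥ k`, and `C` beats `A` forces `s ≤ k`. Conversely, given a partition, the agents of one
part vote `A > B > C` and the others `C > A > B`. -/

section PrefWeight

variable {α β : Type}

noncomputable def prefWeightList (agents : List (ℕ × (α → α → Prop))) (a b : α) : ℕ :=
  (agents.map fun p => if p.2 a b then p.1 else 0).sum

theorem prefWeight_eq_prefWeightList (P : Profile α) (a b : α) :
    prefWeight P a b = prefWeightList P.agents a b :=
  rfl

@[simp]
theorem prefWeightList_nil (a b : α) : prefWeightList [] a b = 0 :=
  rfl

@[simp]
theorem prefWeightList_cons (p : ℕ × (α → α → Prop)) (ps : List (ℕ × (α → α → Prop)))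
    (a b : α) :
    prefWeightList (p :: ps) a b = (if p.2 a b then p.1 else 0) + prefWeightList ps a b := by
  simp [prefWeightList]

@[simp]
theorem prefWeightList_append (ps qs : List (ℕ × (α → α → Prop))) (a b : α) :
    prefWeightList (ps ++ qs) a b = prefWeightList ps a b + prefWeightList qs a b := by
  simp [prefWeightList]

@[simp]
theorem prefWeightList_map_const (f : β → ℕ) (r : α → α → Prop) (l : List β) (a b : α) :
    prefWeightList (l.map fun x => (f x, r)) a b = if r a b then (l.map f).sum else 0 := by
  induction l with
  | nil => simp
  | cons x l ih => split_ifs at ih ⊢ <;> simp_all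

theorem List.Perm.prefWeightList_eq {ps qs : List (ℕ × (α → α → Prop))} (h : ps.Perm qs)
    (a b : α) : prefWeightList ps a b = prefWeightList qs a b :=
  (h.map _).sum_eq

theorem prefWeightList_le_prefWeightList {ps : List (ℕ × (α → α → Prop))} {a b c d : α}
    (h : ∀ p ∈ ps, p.2 a b → p.2 c d) : prefWeightList ps a b ≤ prefWeightList ps c d := by
  induction ps with
  | nil => rfl
  | cons p ps ih =>
    simp only [List.mem_cons, forall_eq_or_imp] at h
    simp only [prefWeightList_cons]
    gcongr ?_ + ?_
    · split_ifs <;> simp_all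
    · exact ih h.2

theorem prefWeightList_eq_zero {ps : List (ℕ × (α → α → Prop))} {a b : α}
    (h : ∀ p ∈ ps, ¬ p.2 a b) : prefWeightList ps a b = 0 :=
  List.sum_eq_zero fun n hn => by
    obtain ⟨p, hp, rfl⟩ := List.mem_map.1 hn
    simp [h p hp]

theorem prefWeightList_add_swap {ps : List (ℕ × (α → α → Prop))} (h : ∀ p ∈ ps, IsSTO p.2)
    {a b : α} (hab : a ≠ b) :
    prefWeightList ps a b + prefWeightList ps b a = (ps.map Prod.fst).sum := by
  induction ps with
  | nil => rfl
  | cons p ps ih =>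
    simp only [List.mem_cons, forall_eq_or_imp] at h
    obtain ⟨⟨⟨hasymm, -⟩, htotal⟩, hps⟩ := h
    rcases htotal a b hab with hp | hp
    · simp [hp, hasymm _ _ hp, ← ih hps]
      omega
    · simp [hp, hasymm _ _ hp, ← ih hps]
      omega

theorem exists_sublist_prefWeightList_eq {f : β → ℕ} {l : List β}
    {ps : List (ℕ × (α → α → Prop))} (h : List.Forall₂ (fun x p => p.1 = f x) l ps) (a b : α) :
    ∃ s : List β, s.Sublist l ∧ prefWeightList ps a b = (s.map f).sum := by
  induction h with
  | nil => exact ⟨[], List.Sublist.slnil, rfl⟩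
  | @cons x p l ps hxp _ ih =>
    obtain ⟨s, hs, hsum⟩ := ih
    by_cases hp : p.2 a b
    · exact ⟨x :: s, hs.cons_cons x, by simp [hp, hxp, hsum]⟩
    · exact ⟨s, hs.cons x, by simp [hp, hsum]⟩

theorem maj_isTournament (Q : Profile α) (hQ : ∀ q ∈ Q.agents, IsSTO q.2) :
    IsTournament (maj Q) := by
  refine ⟨fun a => lt_irrefl _, fun a b hab => ?_⟩
  have htotal := prefWeightList_add_swap hQ hab
  obtain ⟨m, hm⟩ := Q.oddSum
  simp only [maj, prefWeight_eq_prefWeightList]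
  omega

end PrefWeight

section Completion

variable {α β : Type}

def Completes (p q : ℕ × (α → α → Prop)) : Prop :=
  p.1 = q.1 ∧ IsSTO q.2 ∧ ∀ a b, p.2 a b → q.2 a b

theorem IsSTO.eq_of_le {r s : α → α → Prop} (hr : IsSTO r) (hs : IsSPO s)
    (h : ∀ a b, r a b → s a b) : s = r := by
  funext a b
  refine propext ⟨fun hab => ?_, h a b⟩
  have hne : a ≠ b := by
    rintro rfl
    exact hs.1 a a hab hab
  exact (hr.2 a b hne).resolve_right fun hba => hs.1 a b hab (h b a hba)

theorem Completes.eq_of_isSTO {p q : ℕ × (α → α → Prop)} (hp : IsSTO p.2) (h : Completes p q) :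
    q = p :=
  Prod.ext h.1.symm (hp.eq_of_le h.2.1.1 h.2.2)

theorem completes_self {p : ℕ × (α → α → Prop)} (hp : IsSTO p.2) : Completes p p :=
  ⟨rfl, hp, fun _ _ h => h⟩

theorem forall₂_completes_map {r s : α → α → Prop} (hr : IsSTO r) (hsr : ∀ a b, s a b → r a b)
    (f : β → ℕ) (l : List β) :
    List.Forall₂ Completes (l.map fun x => (f x, s)) (l.map fun x => (f x, r)) :=
  List.forall₂_map_left_iff.2 <| List.forall₂_map_right_iff.2 <|
    List.forall₂_same.2 fun _ _ => ⟨rfl, hr, hsr⟩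

theorem List.Forall₂.exists_mem_left {R : α → β → Prop} {l₁ : List α} {l₂ : List β}
    (h : List.Forall₂ R l₁ l₂) {b : β} (hb : b ∈ l₂) : ∃ a ∈ l₁, R a b := by
  induction h with
  | nil => cases hb
  | cons hab _ ih =>
    rcases List.mem_cons.1 hb with rfl | hb
    · exact ⟨_, List.mem_cons_self, hab⟩
    · obtain ⟨a, ha, hR⟩ := ih hb
      exact ⟨a, List.mem_cons_of_mem _ ha, hR⟩

theorem map_fst_eq_of_forall₂_completes {ps qs : List (ℕ × (α → α → Prop))}
    (h : List.Forall₂ Completes ps qs) : ps.map Prod.fst = qs.map Prod.fst :=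
  List.forall₂_eq_eq_eq ▸ List.forall₂_map_left_iff.2
    (List.forall₂_map_right_iff.2 (h.imp fun _ _ hpq => hpq.1))

theorem IsCompletion.isSTO {P Q : Profile α} (h : IsCompletion P Q) :
    ∀ q ∈ Q.agents, IsSTO q.2 := fun _ hq =>
  let ⟨_, _, hpq⟩ := List.Forall₂.exists_mem_left h hq
  hpq.2.1

def Profile.ofCompletion (P : Profile α) (agents : List (ℕ × (α → α → Prop)))
    (h : List.Forall₂ Completes P.agents agents) : Profile α where
  agents := agents
  pos _ hq :=
    let ⟨p, hp, hpq⟩ := h.exists_mem_left hq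
    hpq.1 ▸ P.pos p hp
  spo _ hq :=
    let ⟨_, _, hpq⟩ := h.exists_mem_left hq
    hpq.2.1.1
  oddSum := map_fst_eq_of_forall₂_completes h ▸ P.oddSum

theorem isCompletion_ofCompletion (P : Profile α) (agents : List (ℕ × (α → α → Prop)))
    (h : List.Forall₂ Completes P.agents agents) : IsCompletion P (P.ofCompletion agents h) :=
  h

end Completion

section Agenda

variable {α : Type} {T : α → α → Prop}

theorem IsTournament.not_rel_of_rel (hT : IsTournament T) {a b : α} (h : T a b) : ¬ T b a := by
  by_cases hab : a = b
  · subst hab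
    exact absurd h (hT.1 a)
  · exact (hT.2 a b hab).1 h

theorem winner_mem_leaves (T : α → α → Prop) : ∀ t : Agenda α, winner T t ∈ t.leaves
  | .leaf a => List.mem_singleton_self a
  | .node l r => by
    rw [winner]
    split_ifs
    · exact List.mem_append_left _ (winner_mem_leaves T l)
    · exact List.mem_append_right _ (winner_mem_leaves T r)

theorem reflTransGen_winner (hT : IsTournament T) :
    ∀ {t : Agenda α}, t.leaves.Nodup → ∀ x ∈ t.leaves, Relation.ReflTransGen T (winner T t) x
  | .leaf a, _, x, hx => List.mem_singleton.1 hx ▸ Relation.ReflTransGen.refl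
  | .node l r, hnd, x, hx => by
    rw [Agenda.leaves, List.nodup_append] at hnd
    obtain ⟨hl, hr, hdisj⟩ := hnd
    have hne : winner T l ≠ winner T r :=
      hdisj _ (winner_mem_leaves T l) _ (winner_mem_leaves T r)
    rw [winner]
    rcases List.mem_append.1 hx with hx | hx <;> split_ifs with hlr
    · exact reflTransGen_winner hT hl x hx
    · exact .head ((hT.2 _ _ hne.symm).2 hlr) (reflTransGen_winner hT hl x hx)
    · exact .head hlr (reflTransGen_winner hT hr x hx)
    · exact reflTransGen_winner hT hr x hx

end Agenda

namespace Cand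

theorem rel_B_C_and_rel_C_A {T : Cand → Cand → Prop} (hT : IsTournament T) (hAB : T A B)
    (hBA : Relation.ReflTransGen T B A) : T B C ∧ T C A := by
  have hnBA := hT.not_rel_of_rel hAB
  obtain h | ⟨c, hBc, hcA⟩ := Relation.ReflTransGen.cases_head_iff.1 hBA
  · cases h
  cases c
  · exact absurd hBc hnBA
  · exact absurd hBc (hT.1 B)
  obtain h | ⟨d, hCd, -⟩ := Relation.ReflTransGen.cases_head_iff.1 hcA
  · cases h
  cases d
  · exact ⟨hBc, hCd⟩
  · exact absurd hCd (hT.not_rel_of_rel hBc)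
  · exact absurd hCd (hT.1 C)

theorem isSTO_rank (f : Cand → ℕ) (hf : Function.Injective f) : IsSTO fun x y => f x < f y :=
  ⟨⟨fun _ _ h h' => h.asymm h', fun _ _ _ => lt_trans⟩,
    fun _ _ hab => (hf.ne hab).lt_or_gt⟩

end Cand

def ordABC : Cand → Cand → Prop :=
  fun x y => (match x with | .A => 0 | .B => 1 | .C => 2) <
             (match y with | .A => 0 | .B => 1 | .C => (2:ℕ))

def ordCAB : Cand → Cand → Prop :=
  fun x y => (match x with | .C => 0 | .A => 1 | .B => 2) <
             (match y with | .C => 0 | .A => 1 | .B => (2:ℕ))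

theorem isSTO_ordBCA : IsSTO ordBCA := Cand.isSTO_rank _ (by decide)
theorem isSTO_ordBAC : IsSTO ordBAC := Cand.isSTO_rank _ (by decide)
theorem isSTO_ordCBA : IsSTO ordCBA := Cand.isSTO_rank _ (by decide)
theorem isSTO_ordABC : IsSTO ordABC := Cand.isSTO_rank _ (by decide)
theorem isSTO_ordCAB : IsSTO ordCAB := Cand.isSTO_rank _ (by decide)

theorem List.sum_map_const_mul {R : Type} [NonUnitalNonAssocSemiring R] (r : R) (l : List R) :
    (l.map (r * ·)).sum = r * l.sum := by
  simpa using List.sum_map_mul_left l id r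

namespace P17

variable {ks : List ℕ} {k : ℕ} {hk : 0 < k} {hpos : ∀ x ∈ ks, 0 < x} {hsum : ks.sum = 2 * k}
  {Q : Profile Cand} {qs : List (ℕ × (Cand → Cand → Prop))}

theorem maj_B_C_iff
    (hQ : Q.agents = (1, ordBCA) :: (2 * k - 1, ordBAC) :: (2 * k - 1, ordCBA) :: qs) :
    maj Q .B .C ↔ prefWeightList qs .C .B ≤ prefWeightList qs .B .C := by
  simp [maj, prefWeight_eq_prefWeightList, hQ, ordBCA, ordBAC, ordCBA]
  omega

theorem maj_C_A_iff
    (hQ : Q.agents = (1, ordBCA) :: (2 * k - 1, ordBAC) :: (2 * k - 1, ordCBA) :: qs) :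
    maj Q .C .A ↔ prefWeightList qs .A .C ≤ prefWeightList qs .C .A := by
  simp [maj, prefWeight_eq_prefWeightList, hQ, ordBCA, ordBAC, ordCBA]
  omega

theorem maj_A_B_iff (hk : 0 < k)
    (hQ : Q.agents = (1, ordBCA) :: (2 * k - 1, ordBAC) :: (2 * k - 1, ordCBA) :: qs) :
    maj Q .A .B ↔ prefWeightList qs .B .A + (4 * k - 1) < prefWeightList qs .A .B := by
  simp [maj, prefWeight_eq_prefWeightList, hQ, ordBCA, ordBAC, ordCBA]
  omega

theorem exists_agents_eq_of_isCompletion (h : IsCompletion (P17 ks k hk hpos hsum) Q) :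
    ∃ qs, Q.agents = (1, ordBCA) :: (2 * k - 1, ordBAC) :: (2 * k - 1, ordCBA) :: qs ∧
      List.Forall₂ Completes (ks.map fun x => (2 * x, onlyAB)) qs := by
  obtain ⟨q₁, _, h₁, h₂₃, hQ⟩ := List.forall₂_cons_left_iff.1 h
  obtain ⟨q₂, _, h₂, hrest, rfl⟩ := List.forall₂_cons_left_iff.1 h₂₃
  obtain ⟨q₃, qs, h₃, htail, rfl⟩ := List.forall₂_cons_left_iff.1 hrest
  rw [Completes.eq_of_isSTO isSTO_ordBCA h₁, Completes.eq_of_isSTO isSTO_ordBAC h₂,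
    Completes.eq_of_isSTO isSTO_ordCBA h₃] at hQ
  exact ⟨qs, hQ, htail⟩

theorem exists_sublist_sum_eq_of_fwpp (h : FWPp (P17 ks k hk hpos hsum) .B) :
    ∃ s : List ℕ, s.Sublist ks ∧ s.sum = k := by
  obtain ⟨Q, hQ, t, ht, -, hwin⟩ := h
  obtain ⟨qs, hagents, htail⟩ := exists_agents_eq_of_isCompletion hQ
  have hqs : ∀ q ∈ qs, IsSTO q.2 ∧ q.2 .A .B := by
    intro q hq
    obtain ⟨p, hp, hpq⟩ := htail.exists_mem_left hq
    obtain ⟨x, -, rfl⟩ := List.mem_map.1 hp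
    exact ⟨hpq.2.1, hpq.2.2 _ _ ⟨rfl, rfl⟩⟩
  have htotal : (qs.map Prod.fst).sum = 4 * k := by
    rw [← map_fst_eq_of_forall₂_completes htail, List.map_map]
    change (ks.map (2 * ·)).sum = 4 * k
    rw [List.sum_map_const_mul, hsum]
    ring
  have hsto : ∀ q ∈ qs, IsSTO q.2 := fun q hq => (hqs q hq).1
  have hAB : maj Q .A .B := by
    have hswap := prefWeightList_add_swap hsto (show Cand.A ≠ .B by decide)
    have hBA := prefWeightList_eq_zero (a := Cand.B) (b := .A) (ps := qs)
      fun q hq => (hqs q hq).1.1.1 _ _ (hqs q hq).2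
    rw [maj_A_B_iff hk hagents]
    omega
  have hT := maj_isTournament Q hQ.isSTO
  obtain ⟨hBC, hCA⟩ := Cand.rel_B_C_and_rel_C_A hT hAB
    (hwin ▸ reflTransGen_winner hT ht.1 _ (ht.2 .A))
  rw [maj_B_C_iff hagents] at hBC
  rw [maj_C_A_iff hagents] at hCA
  obtain ⟨s, hs, hsBC⟩ := exists_sublist_prefWeightList_eq
    ((List.forall₂_map_left_iff.1 htail).imp fun _ _ h => h.1.symm) Cand.B .C
  have hBC_le_AC : prefWeightList qs .B .C ≤ prefWeightList qs .A .C :=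
    prefWeightList_le_prefWeightList fun q hq => (hqs q hq).1.1.2 _ _ _ (hqs q hq).2
  have hCA_le_CB : prefWeightList qs .C .A ≤ prefWeightList qs .C .B :=
    prefWeightList_le_prefWeightList fun q hq hq' => (hqs q hq).1.1.2 _ _ _ hq' (hqs q hq).2
  have hswap := prefWeightList_add_swap hsto (show Cand.B ≠ .C by decide)
  rw [List.sum_map_const_mul] at hsBC
  exact ⟨s, hs, by omega⟩

theorem fwpp_of_perm_append {l₁ l₂ : List ℕ} (hperm : ks.Perm (l₁ ++ l₂)) (h₁ : l₁.sum = k)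
    (h₂ : l₂.sum = k) : FWPp (P17 ks k hk hpos hsum) .B := by
  set tl := l₁.map (fun x => (2 * x, ordABC)) ++ l₂.map (fun x => (2 * x, ordCAB))
  have htl : List.Forall₂ Completes ((l₁ ++ l₂).map fun x => (2 * x, onlyAB)) tl := by
    rw [List.map_append]
    refine List.rel_append (forall₂_completes_map isSTO_ordABC ?_ _ _)
      (forall₂_completes_map isSTO_ordCAB ?_ _ _) <;>
    · rintro _ _ ⟨rfl, rfl⟩
      simp [ordABC, ordCAB]
  obtain ⟨qs, hqs, hqs_tl⟩ := List.perm_comp_forall₂ (hperm.map _) htl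
  let Q := (P17 ks k hk hpos hsum).ofCompletion
    ((1, ordBCA) :: (2 * k - 1, ordBAC) :: (2 * k - 1, ordCBA) :: qs)
    (.cons (completes_self isSTO_ordBCA) (.cons (completes_self isSTO_ordBAC)
      (.cons (completes_self isSTO_ordCBA) hqs)))
  have hweights : ∀ a b, prefWeightList qs a b = prefWeightList tl a b := hqs_tl.prefWeightList_eq
  have hBC : maj Q .B .C :=
    (maj_B_C_iff rfl).2 (by simp [hweights, tl, ordABC, ordCAB, List.sum_map_const_mul, h₁, h₂])
  have hCA : maj Q .C .A :=
    (maj_C_A_iff rfl).2 (by simp [hweights, tl, ordABC, ordCAB, List.sum_map_const_mul, h₁, h₂])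
  refine ⟨Q, isCompletion_ofCompletion _ _ _, .node (.leaf .B) (.node (.leaf .A) (.leaf .C)),
    ⟨by decide, by decide⟩, by simp [IsBalanced, Agenda.depths], ?_⟩
  have hAC : ¬ maj Q .A .C := lt_asymm hCA
  simp only [winner, hAC, hBC, if_false, if_true]

end P17

/-- `B` is a fair weak possible winner (wins some balanced
agenda in some completion) of the reduction profile iff the multiset `ks`
can be partitioned into two parts each summing to `k`. -/
theorem stmt18 (ks : List ℕ) (k : ℕ) (hk : 0 < k) (hpos : ∀ x ∈ ks, 0 < x)
    (hsum : ks.sum = 2 * k) :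
    FWPp (P17 ks k hk hpos hsum) Cand.B ↔
      ∃ l₁ l₂ : List ℕ, ks.Perm (l₁ ++ l₂) ∧ l₁.sum = k ∧ l₂.sum = k := by
  constructor
  · intro h
    obtain ⟨s, hs, hsk⟩ := P17.exists_sublist_sum_eq_of_fwpp h
    obtain ⟨l, hl⟩ := hs.exists_perm_append
    have hsum_l := hl.sum_eq
    rw [List.sum_append] at hsum_l
    exact ⟨s, l, hl, hsk, by omega⟩
  · rintro ⟨l₁, l₂, hperm, h₁, h₂⟩
    exact P17.fwpp_of_perm_append hperm h₁ h₂
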